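/- Let M be a compact oriented smooth (2n+1)-manifold with n ≥ 1, α a smooth complex 1-form, Θ a smooth complex 2-form, and η a smooth nowhere-vanishing real 1-form on M satisfying dα ∧ η = Θ ∧ η and dη = (α + ᾱ) ∧ η. Then the top-degree form (iΘ − (1/n) iα ∧ ᾱ)^n ∧ η cannot be a positive volume form on M. -/

import Mathlib

/-- An abstract calculus of smooth complex-valued differential forms on a compact
oriented smooth manifold (all degrees collected in one algebra `A`, with the
grading recorded by the predicate `deg`): wedge product is `*`, `d` is the
exterior derivative, `conj` is complex conjugation of forms, `integral` is
integration of top-degree forms over the compact oriented manifold (so that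
Stokes' theorem holds), `pos` singles out the positive volume forms, and
`nonvanishing` the nowhere-vanishing forms. -/
structure FormCalculus where
  A : Type
  [ring : Ring A]
  [alg : Algebra ℂ A]
  deg : ℕ → A → Prop
  d : A → A
  conj : A → A
  integral : A → ℂ
  pos : A → Prop
  nonvanishing : A → Prop
  deg_add : ∀ (k : ℕ) (a b : A), deg k a → deg k b → deg k (a + b)
  deg_smul : ∀ (k : ℕ) (c : ℂ) (a : A), deg k a → deg k (c • a)
  deg_mul : ∀ (j k : ℕ) (a b : A), deg j a → deg k b → deg (j + k) (a * b)
  deg_d : ∀ (k : ℕ) (a : A), deg k a → deg (k + 1) (d a)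
  d_add : ∀ a b : A, d (a + b) = d a + d b
  d_smul : ∀ (c : ℂ) (a : A), d (c • a) = c • d a
  d_d : ∀ a : A, d (d a) = 0
  leibniz : ∀ (j : ℕ) (a b : A), deg j a →
    d (a * b) = d a * b + ((-1 : ℂ) ^ j) • (a * d b)
  comm : ∀ (j k : ℕ) (a b : A), deg j a → deg k b →
    a * b = ((-1 : ℂ) ^ (j * k)) • (b * a)
  conj_add : ∀ a b : A, conj (a + b) = conj a + conj b
  conj_smul : ∀ (c : ℂ) (a : A), conj (c • a) = (starRingEnd ℂ c) • conj a
  conj_mul : ∀ a b : A, conj (a * b) = conj a * conj b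
  conj_conj : ∀ a : A, conj (conj a) = a
  conj_d : ∀ a : A, conj (d a) = d (conj a)
  integral_add : ∀ a b : A, integral (a + b) = integral a + integral b
  integral_smul : ∀ (c : ℂ) (a : A), integral (c • a) = c * integral a
  /-- Stokes' theorem on the compact manifold without boundary. -/
  stokes : ∀ a : A, integral (d a) = 0
  /-- A positive volume form has positive total integral. -/
  pos_integral : ∀ a : A, pos a → 0 < (integral a).re

attribute [instance] FormCalculus.ring FormCalculus.alg

/-! Write `T = dα`, `μ = dη` and `b = iΘ - (i/n) α ∧ ᾱ`. Since `Θ ∧ η = T ∧ η` and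
`α ∧ ᾱ ∧ η = α ∧ μ`, one gets `b ∧ η = i T ∧ η - (i/n) α ∧ μ` and `b ∧ α ∧ μ = i T ∧ α ∧ μ`,
hence `bⁿ ∧ η = iⁿ (Tⁿ ∧ η - Tⁿ⁻¹ ∧ α ∧ μ) = iⁿ d(Tⁿ⁻¹ ∧ α ∧ η)`. An exact top-degree form
integrates to zero by Stokes, so it is not a positive volume form. -/

theorem pow_succ_mul_eq_of_mul_eq {R A : Type*} [CommRing R] [Ring A] [Algebra R A]
    {b T x y : A} {l c : R} (hx : b * x = l • (T * x) + c • y) (hy : b * y = l • (T * y))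
    (hTx : Commute T x) (hTy : Commute T y) (k : ℕ) :
    b ^ (k + 1) * x = l ^ (k + 1) • (T ^ (k + 1) * x) + ((k + 1) * l ^ k * c) • (T ^ k * y) := by
  have hxj (j : ℕ) : b * (T ^ j * x) = l • (T ^ (j + 1) * x) + c • (T ^ j * y) := by
    rw [(hTx.pow_left j).eq, ← mul_assoc, hx, add_mul, smul_mul_assoc, smul_mul_assoc,
      mul_assoc, ← (hTx.pow_left j).eq, ← mul_assoc, ← pow_succ', ← (hTy.pow_left j).eq]
  have hyj (j : ℕ) : b * (T ^ j * y) = l • (T ^ (j + 1) * y) := by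
    rw [(hTy.pow_left j).eq, ← mul_assoc, hy, smul_mul_assoc, mul_assoc,
      ← (hTy.pow_left j).eq, ← mul_assoc, ← pow_succ']
  induction k with
  | zero => simpa using hx
  | succ k ih =>
    rw [pow_succ', mul_assoc, ih, mul_add, mul_smul_comm, mul_smul_comm, hxj, hyj]
    push_cast
    module

namespace FormCalculus

variable (S : FormCalculus)

instance : IsAddTorsionFree S.A := .of_isTorsionFree ℂ S.A

theorem conj_neg (a : S.A) : S.conj (-a) = -S.conj a := by
  simpa using S.conj_smul (-1) a

theorem anticomm_of_deg_one {a b : S.A} (ha : S.deg 1 a) (hb : S.deg 1 b) :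
    a * b = -(b * a) := by
  simpa using S.comm 1 1 a b ha hb

theorem mul_self_eq_zero_of_deg_one {a : S.A} (ha : S.deg 1 a) : a * a = 0 :=
  self_eq_neg.mp (S.anticomm_of_deg_one ha ha)

theorem commute_of_deg_two {j : ℕ} {a b : S.A} (ha : S.deg 2 a) (hb : S.deg j b) :
    Commute a b := by
  simpa [Commute, SemiconjBy, pow_mul] using S.comm 2 j a b ha hb

theorem d_pow_mul {T : S.A} (hT : S.deg 2 T) (hdT : S.d T = 0) (k : ℕ) (x : S.A) :
    S.d (T ^ k * x) = T ^ k * S.d x := by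
  induction k generalizing x with
  | zero => simp
  | succ k ih =>
    have hTx : S.d (T * x) = T * S.d x := by simpa [hdT] using S.leibniz 2 T x hT
    rw [pow_succ, mul_assoc, ih, hTx, ← mul_assoc, ← pow_succ]

theorem anticomm_conj_of_deg_one {a b : S.A} (ha : S.deg 1 a) (hb : S.deg 1 b)
    (hbreal : S.conj b = b) : b * S.conj a = -(S.conj a * b) := by
  simpa [S.conj_mul, S.conj_neg, hbreal] using congrArg S.conj (S.anticomm_of_deg_one hb ha)

section LeviFlat

variable {S} {α Θ η : S.A}

theorem add_conj_mul_anticomm (hα : S.deg 1 α) (hη : S.deg 1 η) (hηreal : S.conj η = η) :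
    (α + S.conj α) * η = -(η * (α + S.conj α)) := by
  rw [add_mul, mul_add, S.anticomm_of_deg_one hα hη, S.anticomm_conj_of_deg_one hα hη hηreal]
  abel

/-- The real 1-form `α + ᾱ` kills `dη`: it commutes with the real 2-form `dη = (α + ᾱ) ∧ η`
and, through `η`, also anticommutes with it. -/
theorem add_conj_mul_d_eq_zero (hα : S.deg 1 α) (hη : S.deg 1 η) (hηreal : S.conj η = η)
    (e2 : S.d η = (α + S.conj α) * η) : (α + S.conj α) * S.d η = 0 := by
  have hμα : Commute (S.d η) α := S.commute_of_deg_two (S.deg_d 1 η hη) hα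
  have hμα' : Commute (S.d η) (S.conj α) := by
    simpa [Commute, SemiconjBy, S.conj_mul, S.conj_d, hηreal] using congrArg S.conj hμα.eq
  have hanti : (α + S.conj α) * S.d η = -(S.d η * (α + S.conj α)) := by
    rw [e2, mul_assoc, add_conj_mul_anticomm hα hη hηreal, mul_neg, ← mul_assoc]
  rw [(hμα.add_right hμα').eq] at hanti
  exact self_eq_neg.mp hanti

theorem mul_conj_mul_eq_mul_d (hα : S.deg 1 α) (e2 : S.d η = (α + S.conj α) * η) :
    α * S.conj α * η = α * S.d η := by
  rw [e2, add_mul, mul_add, ← mul_assoc, S.mul_self_eq_zero_of_deg_one hα, zero_mul, zero_add,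
    mul_assoc]

theorem mul_conj_mul_mul_d_eq_zero (hα : S.deg 1 α) (hη : S.deg 1 η) (hηreal : S.conj η = η)
    (e2 : S.d η = (α + S.conj α) * η) : α * S.conj α * (α * S.d η) = 0 := by
  have hconj : S.conj α * S.d η = -(α * S.d η) :=
    eq_neg_of_add_eq_zero_right (by rw [← add_mul, add_conj_mul_d_eq_zero hα hη hηreal e2])
  calc α * S.conj α * (α * S.d η) = α * (S.conj α * S.d η) * α := by
        rw [← (S.commute_of_deg_two (S.deg_d 1 η hη) hα).eq]; noncomm_ring
    _ = -(α * α * S.d η * α) := by rw [hconj]; noncomm_ring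
    _ = 0 := by rw [S.mul_self_eq_zero_of_deg_one hα, zero_mul, zero_mul, neg_zero]

theorem mul_mul_d_eq_d_mul_mul_d (hα : S.deg 1 α) (hΘ : S.deg 2 Θ) (hη : S.deg 1 η)
    (hηreal : S.conj η = η) (e1 : S.d α * η = Θ * η) (e2 : S.d η = (α + S.conj α) * η) :
    Θ * (α * S.d η) = S.d α * (α * S.d η) := by
  have hμ : Θ * S.d η = S.d α * S.d η := by
    rw [e2, add_conj_mul_anticomm hα hη hηreal, mul_neg, mul_neg, ← mul_assoc, ← mul_assoc, e1]
  rw [← mul_assoc, (S.commute_of_deg_two hΘ hα).eq, mul_assoc, hμ, ← mul_assoc,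
    ← (S.commute_of_deg_two (S.deg_d 1 α hα) hα).eq, mul_assoc]

theorem pow_mul_eq_smul_d (m : ℕ) (hα : S.deg 1 α) (hΘ : S.deg 2 Θ) (hη : S.deg 1 η)
    (hηreal : S.conj η = η) (e1 : S.d α * η = Θ * η) (e2 : S.d η = (α + S.conj α) * η) :
    (Complex.I • Θ - (1 / ((m + 1 : ℕ) : ℂ)) • (Complex.I • (α * S.conj α))) ^ (m + 1) * η =
      Complex.I ^ (m + 1) • S.d (S.d α ^ m * (α * η)) := by
  set b := Complex.I • Θ - (1 / ((m + 1 : ℕ) : ℂ)) • (Complex.I • (α * S.conj α)) with hb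
  have hT : S.deg 2 (S.d α) := S.deg_d 1 α hα
  have hbη : b * η =
      Complex.I • (S.d α * η) + (-(1 / ((m + 1 : ℕ) : ℂ) * Complex.I)) • (α * S.d η) := by
    rw [hb, sub_mul, smul_mul_assoc, smul_mul_assoc, smul_mul_assoc, ← e1,
      mul_conj_mul_eq_mul_d hα e2]
    module
  have hbαμ : b * (α * S.d η) = Complex.I • (S.d α * (α * S.d η)) := by
    rw [hb, sub_mul, smul_mul_assoc, smul_mul_assoc, smul_mul_assoc,
      mul_mul_d_eq_d_mul_mul_d hα hΘ hη hηreal e1 e2, mul_conj_mul_mul_d_eq_zero hα hη hηreal e2,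
      smul_zero, smul_zero, sub_zero]
  have hdαη : S.d (α * η) = S.d α * η - α * S.d η := by
    simpa [sub_eq_add_neg] using S.leibniz 1 α η hα
  have hcoef : ((m : ℂ) + 1) * Complex.I ^ m * (-(1 / ((m + 1 : ℕ) : ℂ) * Complex.I)) =
      -Complex.I ^ (m + 1) := by
    push_cast
    field_simp
    ring
  rw [pow_succ_mul_eq_of_mul_eq hbη hbαμ (S.commute_of_deg_two hT hη)
      (S.commute_of_deg_two hT (S.deg_mul 1 2 α _ hα (S.deg_d 1 η hη))) m,
    S.d_pow_mul hT (S.d_d α), hdαη, mul_sub, ← mul_assoc _ (S.d α), ← pow_succ, hcoef, smul_sub,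
    neg_smul, sub_eq_add_neg]

end LeviFlat

end FormCalculus

theorem stmt_4_general (S : FormCalculus) (n : ℕ) (hn : 1 ≤ n)
    (α Θ η : S.A) (hα : S.deg 1 α) (hΘ : S.deg 2 Θ)
    (hη : S.deg 1 η) (hηreal : S.conj η = η)
    (e1 : S.d α * η = Θ * η)
    (e2 : S.d η = (α + S.conj α) * η) :
    ¬ S.pos
      ((Complex.I • Θ - (1 / (n : ℂ)) • (Complex.I • (α * S.conj α))) ^ n * η) := by
  intro hpos
  obtain ⟨m, rfl⟩ := Nat.exists_eq_add_of_le' hn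
  have hintegral := S.pos_integral _ hpos
  rw [S.pow_mul_eq_smul_d m hα hΘ hη hηreal e1 e2, S.integral_smul, S.stokes, mul_zero]
    at hintegral
  exact lt_irrefl _ hintegral

/-- On a compact oriented smooth `(2n+1)`-manifold with
`n ≥ 1` (encoded by the form calculus `S`), if `α` is a smooth complex 1-form,
`Θ` a smooth complex 2-form and `η` a smooth nowhere-vanishing real 1-form
with `dα ∧ η = Θ ∧ η` and `dη = (α + ᾱ) ∧ η`, then the top-degree form
`(iΘ − (1/n) iα ∧ ᾱ)^n ∧ η` cannot be a positive volume form. -/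
theorem stmt_4 (S : FormCalculus) (n : ℕ) (hn : 1 ≤ n)
    (α Θ η : S.A) (hα : S.deg 1 α) (hΘ : S.deg 2 Θ)
    (hη : S.deg 1 η) (hηreal : S.conj η = η)
    (hηnv : S.nonvanishing η)
    (e1 : S.d α * η = Θ * η)
    (e2 : S.d η = (α + S.conj α) * η) :
    ¬ S.pos
      ((Complex.I • Θ - (1 / (n : ℂ)) • (Complex.I • (α * S.conj α))) ^ n * η) :=
  stmt_4_general S n hn α Θ η hα hΘ hη hηreal e1 e2
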